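/- arXiv:2212.02601 — 3 statements merged into one kernel-verified Lean document; each statement's English description precedes it below -/
import Mathlib

section
/- Let (p, p') be a pair of points in [0,1]^n with h(p) < h(p'), and let w be a local wiring diagram. Then w is consistent with (p,p') (i.e., there exists i with p_i ≠ p'_i and (i, sgn(p'_i − p_i)) ∈ w) if and only if the principal ideal I_{(p,p')} = ⟨ ∏_{i : p_i ≠ p'_i} (x_i − sgn(p'_i − p_i)) ⟩ is contained in the prime ideal I_w = ⟨x_j − s : (j,s) ∈ w⟩ in ℝ[x_1,...,x_n]. -/
open MvPolynomial

def IsWiringDiagram {n : ℕ} (w : Finset (Fin n × ℝ)) : Prop :=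
  (∀ p ∈ w, p.2 = 1 ∨ p.2 = -1) ∧ ∀ i s s', (i, s) ∈ w → (i, s') ∈ w → s = s'

noncomputable def Iw {n : ℕ} (w : Finset (Fin n × ℝ)) : Ideal (MvPolynomial (Fin n) ℝ) :=
  Ideal.span ((fun p : Fin n × ℝ => X p.1 - C p.2) '' (w : Set (Fin n × ℝ)))

open Classical in
/-- The ideal `I_{(p,p')} = ⟨ ∏_{p_i ≠ p'_i} (x_i − sgn(p'_i − p_i)) ⟩`. -/
noncomputable def Ipair {n : ℕ} (p p' : Fin n → ℝ) : Ideal (MvPolynomial (Fin n) ℝ) :=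
  Ideal.span {∏ i ∈ Finset.univ.filter (fun i => p i ≠ p' i),
    (X i - C (Real.sign (p' i - p i)))}

def ConsistentPair {n : ℕ} (p p' : Fin n → ℝ) (w : Finset (Fin n × ℝ)) : Prop :=
  ∃ i, p i ≠ p' i ∧ (i, Real.sign (p' i - p i)) ∈ w

open Classical in
/-- `w` is consistent with `(p,p')` iff `I_{(p,p')} ⊆ I_w`. -/
theorem stmt7 {n : ℕ} (h : (Fin n → ℝ) → ℝ) (p p' : Fin n → ℝ)
    (hlt : h p < h p') (hne : p ≠ p')
    (w : Finset (Fin n × ℝ)) (hw : IsWiringDiagram w) :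
    ConsistentPair p p' w ↔ Ipair p p' ≤ Iw w := by
  rw [Ipair, Ideal.span_le, Set.singleton_subset_iff]
  constructor
  · rintro ⟨i, hi, hmem⟩
    have hif : i ∈ Finset.univ.filter (fun i => p i ≠ p' i) := by
      simp [hi]
    rw [← Finset.mul_prod_erase _ _ hif]
    exact Ideal.mul_mem_right _ _
      (Ideal.subset_span ⟨(i, Real.sign (p' i - p i)), hmem, rfl⟩)
  · intro hsub
    by_contra hc
    -- evaluation point
    set q : Fin n → ℝ := fun i => if hex : ∃ s, (i, s) ∈ w then hex.choose else 0 with hq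
    have hker : ∀ f ∈ Iw w, (eval q) f = 0 := by
      intro f hf
      refine Submodule.span_induction ?_ (by simp) (fun a b _ _ ha hb => by simp [ha, hb])
        (fun a b _ hb => by simp [hb]) hf
      rintro g ⟨⟨j, s⟩, hjs, rfl⟩
      have hex : ∃ s, (j, s) ∈ w := ⟨s, hjs⟩
      have : q j = s := by
        rw [hq]; simp only [dif_pos hex]
        exact hw.2 j _ s hex.choose_spec hjs
      simp [this]
    have h0 := hker _ hsub
    rw [eval_prod] at h0
    obtain ⟨i, hif, hi0⟩ := Finset.prod_eq_zero_iff.mp h0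
    simp only [Finset.mem_filter] at hif
    have hpi : p i ≠ p' i := hif.2
    simp only [map_sub, eval_X, eval_C, sub_eq_zero] at hi0
    have hsgn : Real.sign (p' i - p i) ≠ 0 :=
      fun hz => (sub_ne_zero.mpr (Ne.symm hpi)) (Real.sign_eq_zero_iff.mp hz)
    by_cases hex : ∃ s, (i, s) ∈ w
    · have hq : q i = hex.choose := by rw [hq]; simp [dif_pos hex]
      exact hc ⟨i, hpi, by rw [← hi0, hq]; exact hex.choose_spec⟩
    · rw [hq] at hi0; simp [dif_neg hex] at hi0
      exact hsgn hi0.symm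
end

section
/- Let h: [0,1]^n → [0,1] be monotone with wiring diagram W(h) = {(1,1),...,(k,1)} (increasing in x_1,...,x_k and independent of the other variables). Then for any finite data set D = (P, h|_P), the data ideal I_D is contained in ⟨x_1 − 1, ..., x_k − 1⟩. -/
open MvPolynomial

def cube (n : ℕ) : Set (Fin n → ℝ) := Set.Icc 0 1

def IndepOf {n : ℕ} (h : (Fin n → ℝ) → ℝ) (i : Fin n) : Prop :=
  ∀ x y, x ∈ cube n → y ∈ cube n → (∀ j, j ≠ i → x j = y j) → h x = h y

def MonoIncIn {n : ℕ} (h : (Fin n → ℝ) → ℝ) (i : Fin n) : Prop :=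
  ∀ x y, x ∈ cube n → y ∈ cube n → (∀ j, j ≠ i → x j = y j) → x i ≤ y i → h x ≤ h y

noncomputable def Idata {n : ℕ} (P : Finset (Fin n → ℝ)) (h : (Fin n → ℝ) → ℝ) :
    Ideal (MvPolynomial (Fin n) ℝ) :=
  ⨆ p ∈ P, ⨆ p' ∈ P, ⨆ _ : h p < h p', Ipair p p'

lemma mono_lemma {n k : ℕ} (h : (Fin n → ℝ) → ℝ)
    (hinc : ∀ i : Fin n, (i : ℕ) < k → MonoIncIn h i)
    (hind : ∀ i : Fin n, k ≤ (i : ℕ) → IndepOf h i)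
    (x y : Fin n → ℝ) (hx : x ∈ cube n) (hy : y ∈ cube n)
    (hle : ∀ i : Fin n, (i : ℕ) < k → x i ≤ y i) : h x ≤ h y := by
  classical
  have key : ∀ s : Finset (Fin n),
      h x ≤ h (fun j => if j ∈ s then y j else x j) := by
    intro s
    induction s using Finset.induction with
    | empty => simp
    | @insert i s hi ih =>
      set z : Fin n → ℝ := fun j => if j ∈ s then y j else x j with hz
      set z' : Fin n → ℝ := fun j => if j ∈ insert i s then y j else x j with hz'
      have hcube : ∀ w : Fin n → ℝ, (∀ j, w j = x j ∨ w j = y j) → w ∈ cube n := by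
        intro w hw
        constructor
        · intro j; rcases hw j with hwj | hwj <;> rw [hwj]
          exacts [hx.1 j, hy.1 j]
        · intro j; rcases hw j with hwj | hwj <;> rw [hwj]
          exacts [hx.2 j, hy.2 j]
      have hzc : z ∈ cube n := hcube z (fun j => by
        by_cases hj : j ∈ s
        · right; simp only [hz]; exact if_pos hj
        · left; simp only [hz]; exact if_neg hj)
      have hz'c : z' ∈ cube n := hcube z' (fun j => by
        by_cases hj : j ∈ insert i s
        · right; simp only [hz']; exact if_pos hj
        · left; simp only [hz']; exact if_neg hj)
      have hagree : ∀ j, j ≠ i → z j = z' j := by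
        intro j hj
        simp only [hz, hz', Finset.mem_insert]
        by_cases hjs : j ∈ s <;> simp [hjs, hj]
      have hzz' : h z ≤ h z' := by
        by_cases hik : (i : ℕ) < k
        · refine hinc i hik z z' hzc hz'c hagree ?_
          have e1 : z i = x i := by simp [hz, hi]
          have e2 : z' i = y i := by simp [hz']
          rw [e1, e2]; exact hle i hik
        · exact le_of_eq (hind i (le_of_not_gt hik) z z' hzc hz'c hagree)
      exact le_trans ih hzz'
  have := key Finset.univ
  simpa using this

/-- if `h` is increasing in `x_1,…,x_k` and independent of the other
variables, then for any data set in the cube, `I_D ⊆ ⟨x_1 − 1, …, x_k − 1⟩`. -/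
theorem stmt10 {n k : ℕ} (h : (Fin n → ℝ) → ℝ)
    (hinc : ∀ i : Fin n, (i : ℕ) < k → MonoIncIn h i ∧ ¬ IndepOf h i)
    (hind : ∀ i : Fin n, k ≤ (i : ℕ) → IndepOf h i)
    (P : Finset (Fin n → ℝ)) (hP : ∀ p ∈ P, p ∈ cube n) :
    Idata P h ≤ Ideal.span ((fun i : Fin n => X i - C (1 : ℝ)) ''
      {i : Fin n | (i : ℕ) < k}) := by
  classical
  rw [Idata]
  simp only [iSup_le_iff]
  intro p hp p' hp' hlt
  -- find i < k with p i < p' i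
  have hex : ∃ i : Fin n, (i : ℕ) < k ∧ p i < p' i := by
    by_contra hc
    push_neg at hc
    exact absurd (mono_lemma h (fun i hik => (hinc i hik).1) hind p' p
      (hP p' hp') (hP p hp) (fun i hik => hc i hik)) (not_le.mpr hlt)
  obtain ⟨i, hik, hlt'⟩ := hex
  rw [Ipair, Ideal.span_le]
  intro g hg
  simp only [Set.mem_singleton_iff] at hg
  subst hg
  have hmem : i ∈ Finset.univ.filter (fun i => p i ≠ p' i) := by
    simp [ne_of_lt hlt']
  rw [← Finset.mul_prod_erase _ _ hmem]
  have hsign : Real.sign (p' i - p i) = 1 := Real.sign_of_pos (by linarith)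
  rw [hsign, mul_comm]
  exact Ideal.mul_mem_left _ _ (Ideal.subset_span ⟨i, hik, rfl⟩)
end

section
/- Multilinear interpolation on the unit cube preserves monotonicity: let L: [0,1]^k → ℝ be the multilinear interpolant of values v: {0,1}^k → ℝ on the vertices of the cube, L(x) = Σ_{s ∈ {0,1}^k} v(s) ∏_i (x_i if s_i = 1 else 1 − x_i). If v is monotone increasing on vertices (s ≤ s' entrywise implies v(s) ≤ v(s')), then L is monotone increasing on [0,1]^k (x ≤ x' entrywise implies L(x) ≤ L(x')). -/
/-!
Expanding along the first coordinate writes the interpolant of `v` at `x` as the convex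
combination `(1 - x₀) L₀ + x₀ L₁` of the interpolants `L₀ ≤ L₁` of the two facets `s₀ = 0`
and `s₀ = 1`, evaluated at the remaining coordinates. Induction on the dimension makes `L₀`, `L₁`
monotone, and increasing `x₀` moves weight from `L₀` to the larger `L₁`.
-/

noncomputable def multilinearInterp {k : ℕ} (v : (Fin k → Bool) → ℝ)
    (x : Fin k → ℝ) : ℝ :=
  ∑ s : Fin k → Bool, v s * ∏ i, (if s i then x i else 1 - x i)

open Finset

theorem lerp_le_lerp {R : Type*} [CommRing R] [LinearOrder R] [IsStrictOrderedRing R]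
    {t t' a a' b b' : R} (ht : 0 ≤ t) (htt' : t ≤ t') (ht' : t' ≤ 1)
    (ha : a ≤ a') (hb : b ≤ b') (hab' : a' ≤ b') :
    (1 - t) * a + t * b ≤ (1 - t') * a' + t' * b' := by
  have h1t : 0 ≤ 1 - t := by linarith
  have hba' : 0 ≤ b' - a' := sub_nonneg.2 hab'
  calc (1 - t) * a + t * b ≤ (1 - t) * a' + t * b' := by gcongr
    _ = a' + t * (b' - a') := by ring
    _ ≤ a' + t' * (b' - a') := by gcongr
    _ = (1 - t') * a' + t' * b' := by ring

theorem multilinearInterp_mono_left {k : ℕ} {v w : (Fin k → Bool) → ℝ} (hvw : v ≤ w)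
    {x : Fin k → ℝ} (hx : x ∈ Set.Icc 0 1) :
    multilinearInterp v x ≤ multilinearInterp w x := by
  refine sum_le_sum fun s _ => mul_le_mul_of_nonneg_right (hvw s) (prod_nonneg fun i _ => ?_)
  split_ifs
  exacts [hx.1 i, sub_nonneg.2 (hx.2 i)]

theorem multilinearInterp_succ {k : ℕ} (v : (Fin (k + 1) → Bool) → ℝ) (x : Fin (k + 1) → ℝ) :
    multilinearInterp v x =
      (1 - x 0) * multilinearInterp (fun t => v (Fin.cons false t)) (Fin.tail x) +
        x 0 * multilinearInterp (fun t => v (Fin.cons true t)) (Fin.tail x) := by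
  simp only [multilinearInterp, ← (Fin.consEquiv _).sum_comp, Fintype.sum_prod_type,
    Fintype.sum_bool, Fin.prod_univ_succ, mul_sum, Fin.consEquiv, Equiv.coe_fn_mk, Fin.cons_zero,
    Fin.cons_succ, Fin.tail, ↓reduceIte, Bool.false_eq_true, mul_left_comm, add_comm]

theorem multilinearInterp_monotoneOn {k : ℕ} {v : (Fin k → Bool) → ℝ} (hv : Monotone v) :
    MonotoneOn (multilinearInterp v) (Set.Icc 0 1) := by
  induction k with
  | zero =>
    intro x _ x' _ _
    rw [Subsingleton.elim x x']
  | succ k ih =>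
    intro x hx x' hx' hxx'
    have hcons (b : Bool) : Monotone fun t => v (Fin.cons b t) :=
      hv.comp fun s t hst => Fin.cons_le_cons.2 ⟨le_rfl, hst⟩
    have hfacets : (fun t => v (Fin.cons false t)) ≤ (fun t => v (Fin.cons true t)) :=
      fun s => hv (Fin.cons_le_cons.2 ⟨Bool.false_le _, le_rfl⟩)
    have htail {y : Fin (k + 1) → ℝ} (hy : y ∈ Set.Icc 0 1) : Fin.tail y ∈ Set.Icc 0 1 :=
      ⟨fun i => hy.1 i.succ, fun i => hy.2 i.succ⟩
    rw [multilinearInterp_succ, multilinearInterp_succ]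
    exact lerp_le_lerp (hx.1 0) (hxx' 0) (hx'.2 0)
      (ih (hcons false) (htail hx) (htail hx') fun i => hxx' i.succ)
      (ih (hcons true) (htail hx) (htail hx') fun i => hxx' i.succ)
      (multilinearInterp_mono_left hfacets (htail hx'))

/-- multilinear interpolation on the unit cube preserves monotonicity:
if the vertex data is monotone increasing, so is the interpolant on `[0,1]^k`. -/
theorem stmt19 {k : ℕ} (v : (Fin k → Bool) → ℝ)
    (hv : ∀ s s' : Fin k → Bool, (∀ i, s i ≤ s' i) → v s ≤ v s') :
    ∀ x x' : Fin k → ℝ,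
      (∀ i, x i ∈ Set.Icc (0 : ℝ) 1) → (∀ i, x' i ∈ Set.Icc (0 : ℝ) 1) →
      (∀ i, x i ≤ x' i) →
      multilinearInterp v x ≤ multilinearInterp v x' := fun _ _ hx hx' hxx' =>
  multilinearInterp_monotoneOn (fun s s' h => hv s s' h)
    ⟨fun i => (hx i).1, fun i => (hx i).2⟩ ⟨fun i => (hx' i).1, fun i => (hx' i).2⟩ hxx'
end
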